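/- (Monotonicity of r_k in k for odd k) For every η ∈ [0,1] and odd positive integers k ≤ k', r_{k'}(η) ≤ r_k(η). -/

import Mathlib

/-!
With `A_n(p) = P(Bin(2n+1, p) ≥ n+1)`, one has `r_{2n+1}(η) = (1-η) A_n(η) + η A_n(1-η)`.
Adding the two extra trials one at a time (Pascal's rule) gives
`A_{n+1}(p) - A_n(p) = (2p-1) C(2n+1, n+1) (p(1-p))^(n+1)`, hence
`r_{2n+3}(η) - r_{2n+1}(η) = -(1-2η)² C(2n+1, n+1) (η(1-η))^(n+1) ≤ 0`.
-/

noncomputable def rk (k : ℕ) (η : ℝ) : ℝ :=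
  ∑ i ∈ Finset.Icc ((k + 1) / 2) k,
    (k.choose i : ℝ) * (η ^ i * (1 - η) ^ (k - i + 1) + (1 - η) ^ i * η ^ (k - i + 1))

open Finset

noncomputable def binomPmf (m i : ℕ) (p : ℝ) : ℝ := m.choose i * p ^ i * (1 - p) ^ (m - i)

noncomputable def binomTail (m t : ℕ) (p : ℝ) : ℝ := ∑ i ∈ Icc t m, binomPmf m i p

lemma one_sub_mul_binomPmf_succ (m i : ℕ) (p : ℝ) :
    (1 - p) * binomPmf m (i + 1) p = m.choose (i + 1) * p ^ (i + 1) * (1 - p) ^ (m - i) := by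
  rcases lt_or_ge i m with h | h
  · rw [binomPmf, show m - i = m - (i + 1) + 1 by omega]
    ring
  · simp [binomPmf, Nat.choose_eq_zero_of_lt (Nat.lt_succ_of_le h)]

lemma binomPmf_succ_succ (m i : ℕ) (p : ℝ) :
    binomPmf (m + 1) (i + 1) p = p * binomPmf m i p + (1 - p) * binomPmf m (i + 1) p := by
  rw [one_sub_mul_binomPmf_succ, binomPmf, binomPmf, Nat.choose_succ_succ', Nat.cast_add,
    Nat.add_sub_add_right]
  ring

lemma binomTail_eq_binomPmf_add {m t : ℕ} (h : t ≤ m) (p : ℝ) :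
    binomTail m t p = binomPmf m t p + binomTail m (t + 1) p := by
  rw [binomTail, binomTail, ← insert_Icc_add_one_left_eq_Icc h, sum_insert (by simp)]

lemma binomTail_succ_succ {m t : ℕ} (h : t ≤ m) (p : ℝ) :
    binomTail (m + 1) (t + 1) p = binomTail m (t + 1) p + p * binomPmf m t p := by
  have shift : binomTail (m + 1) (t + 1) p = ∑ i ∈ Icc t m, binomPmf (m + 1) (i + 1) p := by
    rw [binomTail, ← map_add_right_Icc, sum_map]
    rfl
  have top : ∑ i ∈ Icc t m, binomPmf m (i + 1) p = binomTail m (t + 1) p := calc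
    _ = ∑ i ∈ Icc (t + 1) (m + 1), binomPmf m i p := by rw [← map_add_right_Icc, sum_map]; rfl
    _ = binomTail m (t + 1) p := by
      simp [sum_Icc_succ_top (by omega : t + 1 ≤ m + 1), binomPmf, binomTail]
  simp only [shift, binomPmf_succ_succ, sum_add_distrib, ← mul_sum, top]
  rw [← binomTail, binomTail_eq_binomPmf_add h]
  ring

lemma binomTail_majority_succ (n : ℕ) (p : ℝ) :
    binomTail (2 * (n + 1) + 1) (n + 2) p = binomTail (2 * n + 1) (n + 1) p
      + (2 * p - 1) * (2 * n + 1).choose (n + 1) * (p * (1 - p)) ^ (n + 1) := by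
  have third := binomTail_succ_succ (show n + 1 ≤ 2 * n + 2 by omega) p
  have second := binomTail_succ_succ (show n + 1 ≤ 2 * n + 1 by omega) p
  have peel := binomTail_eq_binomPmf_add (show n + 1 ≤ 2 * n + 1 by omega) p
  have pascal := binomPmf_succ_succ (2 * n + 1) n p
  have below : binomPmf (2 * n + 1) n p
      = (2 * n + 1).choose (n + 1) * p ^ n * (1 - p) ^ (n + 1) := by
    rw [binomPmf, Nat.choose_symm_half, show 2 * n + 1 - n = n + 1 by omega]
  have above : binomPmf (2 * n + 1) (n + 1) p
      = (2 * n + 1).choose (n + 1) * p ^ (n + 1) * (1 - p) ^ n := by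
    rw [binomPmf, show 2 * n + 1 - (n + 1) = n by omega]
  rw [show 2 * (n + 1) + 1 = 2 * n + 2 + 1 by ring, third, show 2 * n + 2 = 2 * n + 1 + 1 by ring,
    second, pascal, peel, below, above, mul_pow]
  ring

lemma rk_eq_binomTail (k : ℕ) (η : ℝ) :
    rk k η
      = (1 - η) * binomTail k ((k + 1) / 2) η + η * binomTail k ((k + 1) / 2) (1 - η) := by
  simp only [rk, binomTail, binomPmf, mul_sum, ← sum_add_distrib, sub_sub_cancel]
  refine sum_congr rfl fun i _ => ?_
  ring

lemma rk_odd_succ_le (n : ℕ) {η : ℝ} (h₀ : 0 ≤ η) (h₁ : η ≤ 1) :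
    rk (2 * (n + 1) + 1) η ≤ rk (2 * n + 1) η := by
  have half : ∀ m : ℕ, (2 * m + 1 + 1) / 2 = m + 1 := fun m => by omega
  rw [rk_eq_binomTail, rk_eq_binomTail, half, half, binomTail_majority_succ,
    binomTail_majority_succ, sub_sub_cancel, mul_comm (1 - η) η]
  have hc : 0 ≤ ((2 * n + 1).choose (n + 1) : ℝ) * (η * (1 - η)) ^ (n + 1) := by
    have : 0 ≤ 1 - η := by linarith
    positivity
  nlinarith [mul_nonneg (sq_nonneg (1 - 2 * η)) hc]

theorem stmt_16 : ∀ η ∈ Set.Icc (0 : ℝ) 1, ∀ k k' : ℕ, Odd k → Odd k' → 0 < k → k ≤ k' →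
    rk k' η ≤ rk k η := by
  rintro η ⟨h₀, h₁⟩ k k' ⟨n, rfl⟩ ⟨n', rfl⟩ - hle
  exact antitone_nat_of_succ_le (f := fun n => rk (2 * n + 1) η)
    (fun n => rk_odd_succ_le n h₀ h₁) (by omega : n ≤ n')
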